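/- arXiv:1204.0473 — 2 statements merged into one kernel-verified Lean document; each statement's English description precedes it below -/
import Mathlib

section
/- Let R be a commutative ring equipped with a pre-lambda structure λ. Then every formal power series A(t) ∈ R[[t]] with constant coefficient 1 admits a unique Euler product decomposition: there exists a unique sequence (b_k)_{k≥1} of elements of R such that A(t) = ∏_{k≥1} λ(b_k)(t^k), i.e. for every N ≥ 1 one has A(t) ≡ ∏_{k=1}^{N} λ(b_k)(t^k) modulo t^{N+1}. -/
/-!
Since `λ(b) ≡ 1 + b t mod t²`, multiplying a series with constant coefficient `1` by
`λ(b)(t^k)` leaves its coefficients below degree `k` unchanged and adds `b` to the coefficient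
of `t^k`. So the Euler product matches `A` to every order exactly when
`b_N = a_{N+1} - [t^{N+1}] ∏_{k ≤ N} λ(b_k)(t^k)` for all `N`: a course-of-values recursion,
which has exactly one solution.
-/

open PowerSeries

/-- A pre-lambda structure on a commutative ring `R`: a map `λ` assigning to each `m ∈ R`
a formal power series with constant coefficient `1` and coefficient of `t` equal to `m`,
such that `λ(m+n) = λ(m)·λ(n)`. -/
structure PreLambda (R : Type*) [CommRing R] where
  toFun : R → PowerSeries R
  constantCoeff_toFun : ∀ m, PowerSeries.constantCoeff (toFun m) = 1
  coeff_one_toFun : ∀ m, PowerSeries.coeff 1 (toFun m) = m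
  toFun_add : ∀ m n, toFun (m + n) = toFun m * toFun n

variable {R : Type*} [CommRing R]

/-- Substitution of `t^k` for `t` in a formal power series (intended for `k ≥ 1`). -/
noncomputable def substPow (k : ℕ) (f : PowerSeries R) : PowerSeries R :=
  PowerSeries.mk fun n => if k ∣ n then PowerSeries.coeff (n / k) f else 0

theorem Nat.existsUnique_eq_strongRec {α : Type*} [Nonempty α] (F : ℕ → (ℕ → α) → α)
    (hF : ∀ m b b', (∀ k < m, b k = b' k) → F m b = F m b') :
    ∃! b : ℕ → α, ∀ m, b m = F m b := by
  let b : ℕ → α := Nat.strongRec fun m rec =>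
    F m fun k => if h : k < m then rec k h else Classical.arbitrary α
  have hb : ∀ m, b m = F m b := fun m => by
    rw [show b m = _ from Nat.strongRec_eq ..]
    exact hF m _ _ fun k hk => dif_pos hk
  refine ⟨b, hb, fun b' hb' => funext fun m => ?_⟩
  induction m using Nat.strong_induction_on with
  | _ m ih => rw [hb' m, hF m b' b ih, hb m]

namespace PowerSeries

theorem coeff_substPow (k n : ℕ) (f : PowerSeries R) :
    coeff n (substPow k f) = if k ∣ n then coeff (n / k) f else 0 :=
  coeff_mk _ _

theorem constantCoeff_substPow (k : ℕ) (f : PowerSeries R) :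
    constantCoeff (substPow k f) = constantCoeff f := by
  rw [← coeff_zero_eq_constantCoeff_apply, coeff_substPow, if_pos (dvd_zero k), Nat.zero_div,
    coeff_zero_eq_constantCoeff_apply]

theorem coeff_substPow_of_pos_of_lt {k n : ℕ} (hn : 0 < n) (hnk : n < k) (f : PowerSeries R) :
    coeff n (substPow k f) = 0 := by
  rw [coeff_substPow, if_neg fun h => absurd (Nat.le_of_dvd hn h) (not_le.2 hnk)]

theorem coeff_mul_substPow_of_lt {k n : ℕ} (hnk : n < k) (f g : PowerSeries R) :
    coeff n (f * substPow k g) = coeff n f * constantCoeff g := by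
  rw [coeff_mul, Finset.sum_eq_single (n, 0)]
  · simp [coeff_substPow]
  · rintro ⟨i, j⟩ hij hne
    rw [Finset.HasAntidiagonal.mem_antidiagonal] at hij
    rw [coeff_substPow_of_pos_of_lt (by grind) (by omega), mul_zero]
  · simp

theorem coeff_mul_substPow_self {k : ℕ} (hk : 0 < k) (f g : PowerSeries R) :
    coeff k (f * substPow k g) = coeff k f * constantCoeff g + constantCoeff f * coeff 1 g := by
  rw [coeff_mul, Finset.sum_eq_add_of_mem (k, 0) (0, k) (by simp) (by simp) (by grind)]
  · simp [coeff_substPow, Nat.div_self hk]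
  · rintro ⟨i, j⟩ hij hne
    rw [Finset.HasAntidiagonal.mem_antidiagonal] at hij
    rw [coeff_substPow_of_pos_of_lt (by grind) (by grind), mul_zero]

end PowerSeries

namespace PreLambda

variable (Λ : PreLambda R)

noncomputable def eulerPartialProd (b : ℕ → R) (N : ℕ) : PowerSeries R :=
  ∏ k ∈ Finset.range N, substPow (k + 1) (Λ.toFun (b k))

theorem eulerPartialProd_succ (b : ℕ → R) (N : ℕ) :
    Λ.eulerPartialProd b (N + 1) = Λ.eulerPartialProd b N * substPow (N + 1) (Λ.toFun (b N)) :=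
  Finset.prod_range_succ ..

theorem eulerPartialProd_congr {b b' : ℕ → R} {N : ℕ} (h : ∀ k < N, b k = b' k) :
    Λ.eulerPartialProd b N = Λ.eulerPartialProd b' N :=
  Finset.prod_congr rfl fun k hk => by rw [h k (Finset.mem_range.1 hk)]

theorem constantCoeff_eulerPartialProd (b : ℕ → R) (N : ℕ) :
    constantCoeff (Λ.eulerPartialProd b N) = 1 := by
  simp [eulerPartialProd, constantCoeff_substPow, Λ.constantCoeff_toFun]

theorem coeff_eulerPartialProd_of_le (b : ℕ → R) {n N M : ℕ} (hnN : n ≤ N) (hNM : N ≤ M) :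
    coeff n (Λ.eulerPartialProd b M) = coeff n (Λ.eulerPartialProd b N) := by
  induction M, hNM using Nat.le_induction with
  | base => rfl
  | succ M hNM ih =>
    rw [eulerPartialProd_succ, coeff_mul_substPow_of_lt (by omega), Λ.constantCoeff_toFun,
      mul_one, ih]

theorem coeff_succ_eulerPartialProd_succ (b : ℕ → R) (N : ℕ) :
    coeff (N + 1) (Λ.eulerPartialProd b (N + 1)) =
      coeff (N + 1) (Λ.eulerPartialProd b N) + b N := by
  rw [eulerPartialProd_succ, coeff_mul_substPow_self N.succ_pos, Λ.constantCoeff_toFun,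
    constantCoeff_eulerPartialProd, Λ.coeff_one_toFun, mul_one, one_mul]

theorem eulerPartialProd_approx_iff {A : PowerSeries R} (hA : constantCoeff A = 1)
    (b : ℕ → R) :
    (∀ N : ℕ, 1 ≤ N → ∀ n ≤ N, coeff n A = coeff n (Λ.eulerPartialProd b N)) ↔
      ∀ N, b N = coeff (N + 1) A - coeff (N + 1) (Λ.eulerPartialProd b N) := by
  refine ⟨fun h N => ?_, fun h N hN n hnN => ?_⟩
  · rw [h (N + 1) N.succ_pos (N + 1) le_rfl, coeff_succ_eulerPartialProd_succ, add_sub_cancel_left]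
  · rcases n with _ | m
    · rw [coeff_zero_eq_constantCoeff_apply, hA, coeff_zero_eq_constantCoeff_apply,
        constantCoeff_eulerPartialProd]
    · rw [Λ.coeff_eulerPartialProd_of_le b le_rfl hnN, coeff_succ_eulerPartialProd_succ, h m,
        add_sub_cancel]

end PreLambda

/-- **Euler product decomposition.** Every formal power series `A(t)` with constant
coefficient `1` over a commutative ring with a pre-lambda structure `λ` admits a unique
Euler product decomposition: there is a unique sequence `(b_k)_{k≥1}` (here `b k` denotes
`b_{k+1}`) such that for every `N ≥ 1` one has
`A(t) ≡ ∏_{k=1}^{N} λ(b_k)(t^k)` modulo `t^{N+1}`. -/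
theorem eulerProduct_existsUnique (Λ : PreLambda R) (A : PowerSeries R)
    (hA : PowerSeries.constantCoeff A = 1) :
    ∃! b : ℕ → R, ∀ N : ℕ, 1 ≤ N → ∀ n ≤ N,
      PowerSeries.coeff n A =
        PowerSeries.coeff n
          (∏ k ∈ Finset.range N, substPow (k + 1) (Λ.toFun (b k))) := by
  refine (existsUnique_congr (Λ.eulerPartialProd_approx_iff hA)).2 ?_
  exact Nat.existsUnique_eq_strongRec _ fun N b b' h => by rw [Λ.eulerPartialProd_congr h]
end

section
/- Let R be a commutative ring equipped with a pre-lambda structure λ. Then the map Exp : t·R[[t]] → 1+t·R[[t]] defined by Exp(Σ_{k≥1} b_k t^k) := ∏_{k≥1} λ(b_k)(t^k) is a group isomorphism from the additive group (t·R[[t]], +) of power series with zero constant term onto the multiplicative group (1+t·R[[t]], ·) of power series with constant coefficient 1. -/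
open PowerSeries

variable {R : Type*} [CommRing R]

/-- The infinite product `∏_{k≥1} λ(b_k)(t^k)` (here `b k` is the exponent of the factor
with index `k+1`): its coefficient of `t^n` is that of the finite partial product of the
factors of index `≤ n`, which is legitimate since the factor of index `k` is `≡ 1 mod t^k`. -/
noncomputable def eulerProd (Λ : PreLambda R) (b : ℕ → R) : PowerSeries R :=
  PowerSeries.mk fun n =>
    PowerSeries.coeff n (∏ k ∈ Finset.range n, substPow (k + 1) (Λ.toFun (b k)))

/-! The `k`-th factor `λ(b_k)(t^k)` is `≡ 1 + b_k t^k` modulo `t^(k+1)`. Hence modulo `t^(n+1)`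
the product is its finite partial product over `k ≤ n`, which makes `Exp` additive (factorwise,
`λ(b+c) = λ(b) λ(c)` and substitution of `t^k` is a ring homomorphism), and the coefficient of
`t^n` in `Exp(b)` is `b_n` plus an expression in `b_1, …, b_(n-1)` only. This triangular system is
solved for `b` uniquely, one coefficient at a time. -/

theorem substPow_eq_expand {k : ℕ} (hk : k ≠ 0) (f : R⟦X⟧) : substPow k f = expand k hk f := by
  ext n
  simp [substPow, coeff_expand]

theorem sModEq_X_pow_iff {N : ℕ} {f g : R⟦X⟧} :
    f ≡ g [SMOD Ideal.span {(X : R⟦X⟧) ^ N}] ↔ ∀ m < N, coeff m f = coeff m g := by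
  simp only [SModEq.sub_mem, Ideal.mem_span_singleton, X_pow_dvd_iff, map_sub, sub_eq_zero]

theorem expand_sModEq {k N : ℕ} (hk : k ≠ 0) {f g : R⟦X⟧}
    (h : f ≡ g [SMOD Ideal.span {(X : R⟦X⟧) ^ N}]) :
    expand k hk f ≡ expand k hk g [SMOD Ideal.span {(X : R⟦X⟧) ^ (k * N)}] := by
  rw [SModEq.sub_mem, Ideal.mem_span_singleton] at h ⊢
  simpa [pow_mul] using map_dvd (expand k hk) h

section

variable (Λ : PreLambda R)

theorem PreLambda.toFun_sModEq (r : R) :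
    Λ.toFun r ≡ 1 + C r * X [SMOD Ideal.span {(X : R⟦X⟧) ^ 2}] := by
  rw [sModEq_X_pow_iff]
  intro m hm
  interval_cases m
  · simp [Λ.constantCoeff_toFun]
  · simp [Λ.coeff_one_toFun]

theorem substPow_toFun_sModEq (k : ℕ) (r : R) :
    substPow (k + 1) (Λ.toFun r) ≡ 1 + C r * X ^ (k + 1)
      [SMOD Ideal.span {(X : R⟦X⟧) ^ (k + 2)}] := by
  have h := expand_sModEq k.succ_ne_zero (Λ.toFun_sModEq r)
  rw [map_add, map_one, map_mul, expand_C, expand_X] at h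
  rw [substPow_eq_expand k.succ_ne_zero]
  exact h.mono (Ideal.span_singleton_le_span_singleton.2 (pow_dvd_pow X (by omega)))

theorem substPow_toFun_sModEq_one (k : ℕ) (r : R) :
    substPow (k + 1) (Λ.toFun r) ≡ 1 [SMOD Ideal.span {(X : R⟦X⟧) ^ (k + 1)}] := by
  have hX : 1 + C r * X ^ (k + 1) ≡ 1 [SMOD Ideal.span {(X : R⟦X⟧) ^ (k + 1)}] := by
    rw [SModEq.sub_mem, add_sub_cancel_left, Ideal.mem_span_singleton]
    exact dvd_mul_left _ _
  refine ((substPow_toFun_sModEq Λ k r).mono ?_).trans hX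
  exact Ideal.span_singleton_le_span_singleton.2 (pow_dvd_pow X (by omega))

noncomputable def partialEulerProd (b : ℕ → R) (n : ℕ) : R⟦X⟧ :=
  ∏ k ∈ Finset.range n, substPow (k + 1) (Λ.toFun (b k))

theorem coeff_eulerProd (b : ℕ → R) (n : ℕ) :
    coeff n (eulerProd Λ b) = coeff n (partialEulerProd Λ b n) := by
  rw [eulerProd, coeff_mk, partialEulerProd]

theorem constantCoeff_partialEulerProd (b : ℕ → R) (n : ℕ) :
    constantCoeff (partialEulerProd Λ b n) = 1 := by
  simp [partialEulerProd, substPow_eq_expand, Λ.constantCoeff_toFun]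

theorem partialEulerProd_add (b c : ℕ → R) (n : ℕ) :
    partialEulerProd Λ (b + c) n = partialEulerProd Λ b n * partialEulerProd Λ c n := by
  simp [partialEulerProd, Λ.toFun_add, substPow_eq_expand, Finset.prod_mul_distrib]

theorem partialEulerProd_congr {b c : ℕ → R} {n : ℕ} (h : ∀ k < n, b k = c k) :
    partialEulerProd Λ b n = partialEulerProd Λ c n :=
  Finset.prod_congr rfl fun k hk => by rw [h k (Finset.mem_range.1 hk)]

theorem partialEulerProd_sModEq (b : ℕ → R) {n m : ℕ} (h : n ≤ m) :
    partialEulerProd Λ b m ≡ partialEulerProd Λ b n [SMOD Ideal.span {(X : R⟦X⟧) ^ (n + 1)}] := by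
  have htail : ∏ k ∈ Finset.Ico n m, substPow (k + 1) (Λ.toFun (b k)) ≡ 1
      [SMOD Ideal.span {(X : R⟦X⟧) ^ (n + 1)}] := by
    refine (SModEq.prod (y := fun _ => 1) fun k hk => ?_).trans
      (by rw [Finset.prod_const_one]; exact SModEq.rfl)
    refine (substPow_toFun_sModEq_one Λ k (b k)).mono ?_
    exact Ideal.span_singleton_le_span_singleton.2
      (pow_dvd_pow X (Nat.succ_le_succ (Finset.mem_Ico.1 hk).1))
  rw [partialEulerProd, partialEulerProd, ← Finset.prod_range_mul_prod_Ico _ h]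
  simpa using SModEq.rfl.mul htail

theorem eulerProd_sModEq_partialEulerProd (b : ℕ → R) (n : ℕ) :
    eulerProd Λ b ≡ partialEulerProd Λ b n [SMOD Ideal.span {(X : R⟦X⟧) ^ (n + 1)}] := by
  refine sModEq_X_pow_iff.2 fun m hm => ?_
  rw [coeff_eulerProd]
  have h := partialEulerProd_sModEq Λ b (Nat.le_of_lt_succ hm)
  exact (sModEq_X_pow_iff.1 h m m.lt_succ_self).symm

theorem eulerProd_add (b c : ℕ → R) : eulerProd Λ (b + c) = eulerProd Λ b * eulerProd Λ c := by
  ext n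
  have h : eulerProd Λ (b + c) ≡ eulerProd Λ b * eulerProd Λ c
      [SMOD Ideal.span {(X : R⟦X⟧) ^ (n + 1)}] := by
    refine (eulerProd_sModEq_partialEulerProd Λ (b + c) n).trans ?_
    rw [partialEulerProd_add]
    exact ((eulerProd_sModEq_partialEulerProd Λ b n).mul
      (eulerProd_sModEq_partialEulerProd Λ c n)).symm
  exact sModEq_X_pow_iff.1 h n n.lt_succ_self

theorem constantCoeff_eulerProd (b : ℕ → R) : constantCoeff (eulerProd Λ b) = 1 := by
  rw [← coeff_zero_eq_constantCoeff_apply, coeff_eulerProd, coeff_zero_eq_constantCoeff_apply,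
    constantCoeff_partialEulerProd]

theorem coeff_succ_eulerProd (b : ℕ → R) (n : ℕ) :
    coeff (n + 1) (eulerProd Λ b) = coeff (n + 1) (partialEulerProd Λ b n) + b n := by
  have h := (SModEq.rfl (x := partialEulerProd Λ b n)).mul (substPow_toFun_sModEq Λ n (b n))
  rw [coeff_eulerProd, partialEulerProd, Finset.prod_range_succ, ← partialEulerProd,
    sModEq_X_pow_iff.1 h (n + 1) (by omega)]
  simp [mul_add, ← mul_assoc, coeff_mul_X_pow', constantCoeff_partialEulerProd]

theorem eulerProd_injective : Function.Injective (eulerProd Λ) := by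
  intro b c h
  funext n
  induction n using Nat.strong_induction_on with
  | _ n ih =>
    have hn := coeff_succ_eulerProd Λ b n
    rw [h, coeff_succ_eulerProd, partialEulerProd_congr Λ ih] at hn
    exact (add_left_cancel hn).symm

-- Indexing by `Fin n` rather than `Finset.range n` makes the recursion visibly well-founded.
noncomputable def eulerProdInv (A : R⟦X⟧) : ℕ → R
  | n => coeff (n + 1) A -
      coeff (n + 1) (∏ k : Fin n, substPow (k + 1) (Λ.toFun (eulerProdInv A k)))

theorem eulerProdInv_eq (A : R⟦X⟧) (n : ℕ) :
    eulerProdInv Λ A n =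
      coeff (n + 1) A - coeff (n + 1) (partialEulerProd Λ (eulerProdInv Λ A) n) := by
  rw [eulerProdInv, partialEulerProd,
    Fin.prod_univ_eq_prod_range (fun k => substPow (k + 1) (Λ.toFun (eulerProdInv Λ A k)))]

theorem eulerProd_eulerProdInv {A : R⟦X⟧} (hA : constantCoeff A = 1) :
    eulerProd Λ (eulerProdInv Λ A) = A := by
  ext n
  cases n with
  | zero => rw [coeff_zero_eq_constantCoeff_apply, coeff_zero_eq_constantCoeff_apply, hA,
      constantCoeff_eulerProd]
  | succ n => rw [coeff_succ_eulerProd, eulerProdInv_eq, add_sub_cancel]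

end

/-- **Exp is a group isomorphism.** The map `Exp : t·R[[t]] → 1+t·R[[t]]`,
`Exp(Σ_{k≥1} b_k t^k) := ∏_{k≥1} λ(b_k)(t^k)` (a series with zero constant term being
encoded by its sequence of coefficients `b : ℕ → R`, `b k = b_{k+1}`), is a group
isomorphism from the additive group of power series with zero constant term onto the
multiplicative group of power series with constant coefficient `1`. -/
theorem eulerProd_group_isomorphism (Λ : PreLambda R) :
    (∀ b c : ℕ → R, eulerProd Λ (b + c) = eulerProd Λ b * eulerProd Λ c) ∧
    (∀ b : ℕ → R, PowerSeries.constantCoeff (eulerProd Λ b) = 1) ∧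
    (∀ A : PowerSeries R, PowerSeries.constantCoeff A = 1 →
      ∃! b : ℕ → R, eulerProd Λ b = A) :=
  ⟨eulerProd_add Λ, constantCoeff_eulerProd Λ, fun _ hA =>
    ⟨eulerProdInv Λ _, eulerProd_eulerProdInv Λ hA,
      fun _ hb => eulerProd_injective Λ (hb.trans (eulerProd_eulerProdInv Λ hA).symm)⟩⟩
end
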